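/- Let U, Ũ ⊆ ℝⁿ be open sets with the closure of U compact and contained in Ũ, let Ǧ : Ũ × ℝⁿ → ℝ be a smooth family of asymmetric norms, and let F : Ũ × ℝⁿ → ℝ be a horizontally C² family of asymmetric norms which is strongly convex with respect to Ǧ and such that the horizontal gradient d_hF² of (x,y) ↦ F(x,y)² is locally Lipschitz on Ũ × ℝⁿ; suppose that for each x ∈ Ũ the function α ↦ F_*(x, α)² is differentiable with gradient d_vF_*²(x, α). Then the map d_vF_*² : U × ℝⁿ → ℝⁿ is locally Lipschitz. -/

import Mathlib

open scoped RealInnerProductSpace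

/-- `ℝⁿ` with the Euclidean inner product. -/
abbrev En (n : ℕ) := EuclideanSpace ℝ (Fin n)

/-- An asymmetric norm on `ℝⁿ`. -/
def IsAsymNorm {n : ℕ} (F : En n → ℝ) : Prop :=
  (∀ y, 0 ≤ F y) ∧ (∀ y, F y = 0 ↔ y = 0) ∧
  (∀ l : ℝ, 0 < l → ∀ y, F (l • y) = l * F y) ∧
  (∀ y₁ y₂, F (y₁ + y₂) ≤ F y₁ + F y₂)

/-- A horizontally `C¹` family of asymmetric norms on `Ut × ℝⁿ`: `F` is continuous,
each `F x` is an asymmetric norm, and the partial derivative of `F` with respect to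
the (horizontal) variable `x` exists everywhere and is continuous. -/
def HorizC1Family {n : ℕ} (Ut : Set (En n)) (F : En n → En n → ℝ) : Prop :=
  ContinuousOn (fun p : En n × En n => F p.1 p.2) (Ut ×ˢ Set.univ) ∧
  (∀ x ∈ Ut, IsAsymNorm (F x)) ∧
  ∃ DF : En n × En n → (En n →L[ℝ] ℝ),
    (∀ x ∈ Ut, ∀ y, HasFDerivAt (fun x' => F x' y) (DF (x, y)) x) ∧
    ContinuousOn DF (Ut ×ˢ Set.univ)

/-- The family of dual asymmetric norms `F_*(x, α) = sup {⟨α, y⟩ : F x y ≤ 1}`. -/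
noncomputable def dualNormF {n : ℕ} (F : En n → En n → ℝ) (x α : En n) : ℝ :=
  sSup ((fun y => ⟪α, y⟫) '' {y | F x y ≤ 1})

/-- A smooth family of asymmetric norms: each `G x` is an asymmetric norm and
`G` is `C^∞` on `Ut × (ℝⁿ \ {0})`. -/
def SmoothFamily {n : ℕ} (Ut : Set (En n)) (G : En n → En n → ℝ) : Prop :=
  (∀ x ∈ Ut, IsAsymNorm (G x)) ∧
  ContDiffOn ℝ (⊤ : ℕ∞) (fun p : En n × En n => G p.1 p.2) (Ut ×ˢ {y : En n | y ≠ 0})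

/-- The subdifferential of `F(x,·)²` at `y`. -/
def subdiffSqF {n : ℕ} (F : En n → En n → ℝ) (x y : En n) : Set (En n) :=
  {α | ∀ z, (F x y) ^ 2 + ⟪α, z - y⟫ ≤ (F x z) ^ 2}

/-- The family `F` is strongly convex with respect to the family `G` on `Ut`. -/
def StronglyConvexFamilyWrt {n : ℕ} (Ut : Set (En n)) (F G : En n → En n → ℝ) : Prop :=
  ∀ x ∈ Ut, ∀ y z α, α ∈ subdiffSqF F x y →
    (F x y) ^ 2 + ⟪α, z - y⟫ + (G x (z - y)) ^ 2 ≤ (F x z) ^ 2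

/-- A horizontally `C²` family of asymmetric norms: a horizontally `C¹` family whose
horizontal derivative is itself horizontally differentiable, with second horizontal
derivative continuous on `Ut × (ℝⁿ \ {0})`. -/
def HorizC2Family {n : ℕ} (Ut : Set (En n)) (F : En n → En n → ℝ) : Prop :=
  HorizC1Family Ut F ∧
  ∃ DF : En n × En n → (En n →L[ℝ] ℝ),
    (∀ x ∈ Ut, ∀ y, HasFDerivAt (fun x' => F x' y) (DF (x, y)) x) ∧
    ContinuousOn DF (Ut ×ˢ Set.univ) ∧
    ∃ D2F : En n × En n → (En n →L[ℝ] En n →L[ℝ] ℝ),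
      (∀ x ∈ Ut, ∀ y : En n, y ≠ 0 → HasFDerivAt (fun x' => DF (x', y)) (D2F (x, y)) x) ∧
      ContinuousOn D2F (Ut ×ˢ {y : En n | y ≠ 0})

open Metric Set

theorem lipschitzOnWith_of_compact {α β : Type*} [MetricSpace α] [MetricSpace β]
    {s : Set α} {f : α → β} (hs : IsOpen s) (hf : LocallyLipschitzOn s f)
    {K : Set α} (hK : IsCompact K) (hKs : K ⊆ s) :
    ∃ C : NNReal, LipschitzOnWith C f K := by
  rcases K.eq_empty_or_nonempty with rfl | hne
  · exact ⟨1, by simp⟩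
  have h : ∀ x, x ∈ K → ∃ r : ℝ, 0 < r ∧ ∃ C : NNReal, LipschitzOnWith C f (ball x (2 * r)) := by
    intro x hx
    obtain ⟨C, t, ht, hlip⟩ := hf (hKs hx)
    rw [nhdsWithin_eq_nhds.2 (hs.mem_nhds (hKs hx))] at ht
    obtain ⟨r, hr, hrt⟩ := Metric.mem_nhds_iff.1 ht
    exact ⟨r / 2, by linarith, C, hlip.mono (by
      intro z hz
      apply hrt
      simpa using lt_of_lt_of_le hz (by linarith))⟩
  choose! r hr C hC using h
  obtain ⟨t, htK, hcov⟩ := hK.elim_nhds_subcover (fun x => ball x (r x))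
    (fun x hx => ball_mem_nhds x (hr x hx))
  have htne : t.Nonempty := by
    obtain ⟨a, ha⟩ := hne
    obtain ⟨i, hi⟩ := by simpa using hcov ha
    exact ⟨i, hi.1⟩
  set δ : ℝ := t.inf' htne r with hδdef
  have hδ : 0 < δ := by
    rw [hδdef, Finset.lt_inf'_iff]
    exact fun i hi => hr i (htK i hi)
  set C₀ : NNReal := t.sup C
  -- bound on image
  have hcont : ContinuousOn f K := (hf.continuousOn).mono hKs
  obtain ⟨M, hM⟩ := isBounded_iff.1 (hK.image_of_continuousOn hcont).isBounded
  have hM0 : 0 ≤ max M 0 := le_max_right _ _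
  refine ⟨⟨max (C₀ : ℝ) (max M 0 / δ), le_max_of_le_left C₀.coe_nonneg⟩, ?_⟩
  refine lipschitzOnWith_iff_dist_le_mul.2 ?_
  intro a ha b hb
  rcases le_or_gt δ (dist a b) with hd | hd
  · calc dist (f a) (f b) ≤ max M 0 :=
          le_max_of_le_left (hM (mem_image_of_mem f ha) (mem_image_of_mem f hb))
      _ = (max M 0 / δ) * δ := by field_simp
      _ ≤ max (C₀ : ℝ) (max M 0 / δ) * dist a b := by
          apply mul_le_mul (le_max_right _ _) hd hδ.le
          exact le_trans (div_nonneg hM0 hδ.le) (le_max_right _ _)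
  · obtain ⟨i, hit, hai⟩ := by simpa using hcov ha
    have hδi : δ ≤ r i := Finset.inf'_le r hit
    have hbi : b ∈ ball i (2 * r i) := by
      rw [mem_ball]
      calc dist b i ≤ dist b a + dist a i := dist_triangle _ _ _
        _ < δ + r i := by rw [dist_comm b a]; exact add_lt_add_of_lt_of_lt hd hai
        _ ≤ 2 * r i := by linarith
    have hai' : a ∈ ball i (2 * r i) := by
      rw [mem_ball]
      have := hr i (htK i hit); linarith
    have := (lipschitzOnWith_iff_dist_le_mul.1 (hC i (htK i hit))) a hai' b hbi
    calc dist (f a) (f b) ≤ (C i : ℝ) * dist a b := this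
      _ ≤ max (C₀ : ℝ) (max M 0 / δ) * dist a b := by
          apply mul_le_mul_of_nonneg_right _ dist_nonneg
          exact le_max_of_le_left (by exact_mod_cast Finset.le_sup hit)

theorem exists_coercivity {n : ℕ} (C : Set (En n)) (hC : IsCompact C)
    (H : En n → En n → ℝ)
    (hcont : ContinuousOn (fun p : En n × En n => H p.1 p.2) (C ×ˢ (sphere (0 : En n) 1)))
    (hpos : ∀ x ∈ C, ∀ y : En n, ‖y‖ = 1 → 0 < H x y)
    (hhom : ∀ x ∈ C, ∀ l : ℝ, 0 < l → ∀ y, H x (l • y) = l * H x y) :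
    ∃ m : ℝ, 0 < m ∧ ∀ x ∈ C, ∀ y : En n, m * ‖y‖ ^ 2 ≤ (H x y) ^ 2 := by
  by_cases hne : (C ×ˢ (sphere (0 : En n) 1)).Nonempty
  · have hcomp : IsCompact (C ×ˢ (sphere (0 : En n) 1)) :=
      hC.prod (isCompact_sphere _ _)
    obtain ⟨p, hp, hmin⟩ := hcomp.exists_isMinOn hne hcont
    set μ := H p.1 p.2 with hμ
    have hμpos : 0 < μ := hpos p.1 hp.1 p.2 (by simpa using hp.2)
    refine ⟨μ ^ 2, by positivity, fun x hx y => ?_⟩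
    rcases eq_or_ne y 0 with rfl | hy
    · simpa using sq_nonneg (H x 0)
    · have hyn : (0:ℝ) < ‖y‖ := norm_pos_iff.2 hy
      have hu : ‖(‖y‖⁻¹ • y)‖ = 1 := by
        rw [norm_smul]; simp [abs_of_pos (inv_pos.2 hyn), inv_mul_cancel₀ hyn.ne']
      have h1 : H x y = ‖y‖ * H x (‖y‖⁻¹ • y) := by
        have := hhom x hx ‖y‖ hyn (‖y‖⁻¹ • y)
        rwa [smul_smul, mul_inv_cancel₀ hyn.ne', one_smul] at this
      have h2 : μ ≤ H x (‖y‖⁻¹ • y) :=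
        hmin (Set.mk_mem_prod hx (by simpa using hu))
      have h3 : μ * ‖y‖ ≤ H x y := by
        rw [h1]
        calc μ * ‖y‖ ≤ H x (‖y‖⁻¹ • y) * ‖y‖ := by nlinarith
          _ = ‖y‖ * H x (‖y‖⁻¹ • y) := mul_comm _ _
      calc μ ^ 2 * ‖y‖ ^ 2 = (μ * ‖y‖) ^ 2 := by ring
        _ ≤ (H x y) ^ 2 := by nlinarith [mul_nonneg hμpos.le hyn.le]
  · refine ⟨1, one_pos, fun x hx y => ?_⟩
    have hy : y = 0 := by
      by_contra hy
      have hyn : (0:ℝ) < ‖y‖ := norm_pos_iff.2 hy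
      exact hne ⟨(x, ‖y‖⁻¹ • y), Set.mk_mem_prod hx (by
        simp [norm_smul, abs_of_pos (inv_pos.2 hyn), inv_mul_cancel₀ hyn.ne'])⟩
    simp only [hy, norm_zero]; simpa using sq_nonneg (H x 0)

theorem dual_core {n : ℕ} (F : En n → En n → ℝ) (x : En n)
    (hnorm : IsAsymNorm (F x)) (hcont : Continuous (F x)) {m : ℝ} (hm : 0 < m)
    (hcoer : ∀ y, m * ‖y‖ ^ 2 ≤ (F x y) ^ 2)
    (α v : En n) (hv : HasGradientAt (fun β => (dualNormF F x β) ^ 2) v α) :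
    (∀ z, (F x ((4:ℝ)⁻¹ • v)) ^ 2 + ⟪α, z - (4:ℝ)⁻¹ • v⟫ ≤ (F x z) ^ 2) ∧
      m * ‖(4:ℝ)⁻¹ • v‖ ^ 2 ≤ ⟪α, (4:ℝ)⁻¹ • v⟫ := by
  obtain ⟨hpos, hzero, hhom, _⟩ := hnorm
  have f0 : F x 0 = 0 := (hzero 0).2 rfl
  -- boundedness of the "unit ball"
  have hball : ∀ z : En n, F x z ≤ 1 → ‖z‖ ≤ max 1 m⁻¹ := by
    intro z hz
    have h1 : m * ‖z‖ ^ 2 ≤ 1 := le_trans (hcoer z) (by nlinarith [hpos z])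
    rcases le_or_gt ‖z‖ 1 with h | h
    · exact le_max_of_le_left h
    · refine le_max_of_le_right ?_
      rw [show m⁻¹ = 1 / m by ring, le_div_iff₀ hm]
      nlinarith [norm_nonneg z]
  have hbdd : ∀ β : En n, BddAbove ((fun y => ⟪β, y⟫) '' {y | F x y ≤ 1}) := by
    intro β
    refine ⟨‖β‖ * max 1 m⁻¹, ?_⟩
    rintro _ ⟨z, hz, rfl⟩
    calc ⟪β, z⟫ ≤ ‖β‖ * ‖z‖ := real_inner_le_norm β z
      _ ≤ ‖β‖ * max 1 m⁻¹ := mul_le_mul_of_nonneg_left (hball z hz) (norm_nonneg β)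
  have hS0 : (0 : En n) ∈ {y | F x y ≤ 1} := by simp [Set.mem_setOf_eq, f0]
  have hSne : ∀ β : En n, ((fun y => ⟪β, y⟫) '' {y | F x y ≤ 1}).Nonempty :=
    fun β => ⟨⟪β, (0:En n)⟫, ⟨0, hS0, rfl⟩⟩
  have hdnn : ∀ β : En n, 0 ≤ dualNormF F x β := by
    intro β
    have h0 : ⟪β, (0 : En n)⟫ ∈ ((fun y => ⟪β, y⟫) '' {y | F x y ≤ 1}) := ⟨0, hS0, rfl⟩
    have := le_csSup (hbdd β) h0
    simpa [dualNormF] using this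
  -- key inequality (i)
  have hkey : ∀ β z : En n, ⟪β, z⟫ - (F x z) ^ 2 ≤ (dualNormF F x β) ^ 2 / 4 := by
    intro β z
    rcases eq_or_ne z 0 with rfl | hz
    · simp only [inner_zero_right, f0]
      nlinarith [sq_nonneg (dualNormF F x β)]
    · set t := F x z with ht
      have hFne : F x z ≠ 0 := fun h => hz ((hzero z).1 h)
      have htpos : 0 < t := by rw [ht]; exact (hpos z).lt_of_ne (Ne.symm hFne)
      have hu : F x (t⁻¹ • z) = 1 := by
        rw [hhom t⁻¹ (inv_pos.2 htpos) z, ← ht, inv_mul_cancel₀ htpos.ne']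
      have h2 : ⟪β, t⁻¹ • z⟫ ≤ dualNormF F x β :=
        le_csSup (hbdd β) ⟨t⁻¹ • z, le_of_eq hu, rfl⟩
      have h3 : ⟪β, z⟫ = t * ⟪β, t⁻¹ • z⟫ := by
        rw [real_inner_smul_right, ← mul_assoc, mul_inv_cancel₀ htpos.ne', one_mul]
      set D := dualNormF F x β
      nlinarith [sq_nonneg (D / 2 - t), mul_le_mul_of_nonneg_left h2 htpos.le]
  -- existence of a maximizer
  set ψ : En n → ℝ := fun y => ⟪α, y⟫ - (F x y) ^ 2 with hψdef
  have hψ : ∀ z, ψ z = ⟪α, z⟫ - (F x z) ^ 2 := fun z => rfl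
  have hψcont : Continuous ψ := ((innerSL ℝ α).continuous).sub (hcont.pow 2)
  clear_value ψ
  set R₁ : ℝ := (‖α‖ + 1) / m with hR₁
  have hR₁pos : 0 < R₁ := by positivity
  obtain ⟨y₀, hy₀mem, hy₀max⟩ := (isCompact_closedBall (0:En n) R₁).exists_isMaxOn
    ⟨0, mem_closedBall_self hR₁pos.le⟩ hψcont.continuousOn
  have hψ0 : 0 ≤ ψ y₀ := by
    have h : ψ 0 ≤ ψ y₀ := hy₀max (mem_closedBall_self hR₁pos.le)
    rw [hψ 0] at h
    simpa [f0] using h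
  have hglobal : ∀ z, ψ z ≤ ψ y₀ := by
    intro z
    rcases le_or_gt ‖z‖ R₁ with h | h
    · exact hy₀max (by simpa [mem_closedBall, dist_zero_right] using h)
    · have h1 : ⟪α, z⟫ ≤ ‖α‖ * ‖z‖ := real_inner_le_norm α z
      have h2 : m * ‖z‖ ^ 2 ≤ (F x z) ^ 2 := hcoer z
      have h3 : m * R₁ = ‖α‖ + 1 := by rw [hR₁]; field_simp
      have : ψ z ≤ 0 := by
        rw [hψ z]
        nlinarith [norm_nonneg z, norm_nonneg α]
      linarith
  -- the squared dual norm equals 4 * ψ y₀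
  have hle : dualNormF F x α ≤ 2 * Real.sqrt (ψ y₀) := by
    refine csSup_le (hSne α) ?_
    rintro _ ⟨z, hz, rfl⟩
    have hz' : F x z ≤ 1 := hz
    rcases le_or_gt ⟪α, z⟫ 0 with h | h
    · have := Real.sqrt_nonneg (ψ y₀); linarith
    · have hFz : (F x z) ^ 2 ≤ 1 := by nlinarith [hpos z]
      have hmem := hglobal ((⟪α, z⟫ / 2) • z)
      have e1 : ⟪α, (⟪α, z⟫ / 2) • z⟫ = (⟪α, z⟫ / 2) * ⟪α, z⟫ := real_inner_smul_right _ _ _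
      have e2 : F x ((⟪α, z⟫ / 2) • z) = (⟪α, z⟫ / 2) * F x z :=
        hhom _ (by linarith) z
      have h4 : ⟪α, z⟫ ^ 2 / 4 ≤ ψ y₀ := by
        rw [hψ ((⟪α, z⟫ / 2) • z), e1, e2] at hmem
        nlinarith [hpos z]
      calc ⟪α, z⟫ = Real.sqrt (⟪α, z⟫ ^ 2) := (Real.sqrt_sq h.le).symm
        _ ≤ Real.sqrt (4 * ψ y₀) := Real.sqrt_le_sqrt (by linarith)
        _ = 2 * Real.sqrt (ψ y₀) := by
            rw [show (4:ℝ) * ψ y₀ = 2 ^ 2 * ψ y₀ by norm_num, Real.sqrt_mul (by positivity),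
              Real.sqrt_sq (by norm_num)]
  have heq : (dualNormF F x α) ^ 2 = 4 * ψ y₀ := by
    have h1 : (dualNormF F x α) ^ 2 ≤ 4 * ψ y₀ := by
      nlinarith [Real.sq_sqrt hψ0, Real.sqrt_nonneg (ψ y₀), hdnn α]
    have h2 := hkey α y₀
    rw [hψ y₀]
    rw [← hψ y₀] at h2
    linarith [hψ y₀, h2]
  -- subgradient inequality for the squared dual norm
  have hsub : ∀ β, (dualNormF F x α) ^ 2 + ⟪β - α, (4:ℝ) • y₀⟫ ≤ (dualNormF F x β) ^ 2 := by
    intro β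
    have h1 := hkey β y₀
    have h2 : ⟪β - α, (4:ℝ) • y₀⟫ = 4 * (⟪β, y₀⟫ - ⟪α, y₀⟫) := by
      rw [real_inner_smul_right, inner_sub_left]
      try ring
    have h3 := hψ y₀
    linarith
  -- identify v with 4 • y₀
  set w : En n := (4:ℝ) • y₀ - v with hwdef
  set q : ℝ → ℝ := fun t => (dualNormF F x (α + t • w)) ^ 2 - t * ⟪w, (4:ℝ) • y₀⟫ with hqdef
  have hqmin : ∀ t, q 0 ≤ q t := by
    intro t
    have h1 := hsub (α + t • w)
    have h2 : ⟪α + t • w - α, (4:ℝ) • y₀⟫ = t * ⟪w, (4:ℝ) • y₀⟫ := by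
      rw [add_sub_cancel_left, real_inner_smul_left]
    simp only [hqdef]
    rw [h2] at h1
    simp only [zero_smul, add_zero, zero_mul, sub_zero]
    linarith
  have hc : HasDerivAt (fun t : ℝ => α + t • w) w 0 := by
    have := ((hasDerivAt_id (0:ℝ)).smul_const w).const_add α
    simpa using this
  have hq1 : HasDerivAt (fun t : ℝ => (dualNormF F x (α + t • w)) ^ 2) ⟪v, w⟫ 0 := by
    have h0 : (fun t : ℝ => α + t • w) 0 = α := by simp
    have := (h0 ▸ hv.hasFDerivAt).comp_hasDerivAt 0 hc
    simpa [Function.comp_def, InnerProductSpace.toDual_apply_apply] using this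
  have hq : HasDerivAt q (⟪v, w⟫ - ⟪w, (4:ℝ) • y₀⟫) 0 :=
    hq1.sub (hasDerivAt_mul_const _)
  have hder0 : ⟪v, w⟫ - ⟪w, (4:ℝ) • y₀⟫ = 0 := by
    have hloc : IsLocalMin q 0 := Filter.Eventually.of_forall hqmin
    exact hloc.hasDerivAt_eq_zero hq
  have hw0 : w = 0 := by
    have h1 : ⟪w, (4:ℝ) • y₀⟫ - ⟪w, v⟫ = 0 := by
      have := real_inner_comm v w
      linarith
    rw [← inner_sub_right] at h1
    rw [← hwdef] at h1
    exact inner_self_eq_zero.1 h1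
  have hy₀v : y₀ = (4:ℝ)⁻¹ • v := by
    have : (4:ℝ) • y₀ = v := by rwa [sub_eq_zero] at hw0
    rw [← this, smul_smul]
    norm_num
  constructor
  · intro z
    have h1 := hglobal z
    rw [hψ z, hψ y₀] at h1
    have h2 : ⟪α, z - y₀⟫ = ⟪α, z⟫ - ⟪α, y₀⟫ := inner_sub_right _ _ _
    rw [← hy₀v]
    linarith
  · rw [← hy₀v]
    have h1 := hcoer y₀
    rw [hψ y₀] at hψ0
    linarith

set_option maxHeartbeats 1000000 in
/-- The fiberwise gradient of the squared dual norm of a strongly convex horizontally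
`C²` family of asymmetric norms with locally Lipschitz horizontal gradient `d_hF²` is
locally Lipschitz on `U × ℝⁿ`. -/

theorem grad_dual_sq_locallyLipschitz {n : ℕ} (U Ut : Set (En n))
    (hU : IsOpen U) (hUt : IsOpen Ut)
    (hcomp : IsCompact (closure U)) (hsub : closure U ⊆ Ut)
    (G : En n → En n → ℝ) (hG : SmoothFamily Ut G)
    (F : En n → En n → ℝ) (hF : HorizC2Family Ut F)
    (hsc : StronglyConvexFamilyWrt Ut F G)
    (gh : En n × En n → En n)
    (hgh : ∀ x ∈ Ut, ∀ y : En n, HasGradientAt (fun x' => (F x' y) ^ 2) (gh (x, y)) x)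
    (hghLip : LocallyLipschitzOn (Ut ×ˢ (Set.univ : Set (En n))) gh)
    (g : En n → En n → En n)
    (hg : ∀ x ∈ Ut, ∀ α, HasGradientAt (fun β => (dualNormF F x β) ^ 2) (g x α) α) :
    LocallyLipschitzOn (U ×ˢ (Set.univ : Set (En n)))
      (fun p : En n × En n => g p.1 p.2) := by
  obtain ⟨⟨hFcont, hFnorm, _⟩, _⟩ := hF
  rintro ⟨x₀, α₀⟩ ⟨hx₀U, -⟩
  have hx₀Ut : x₀ ∈ Ut := hsub (subset_closure hx₀U)
  -- a closed ball around x₀ inside Ut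
  obtain ⟨r, hr, hrUt⟩ := Metric.isOpen_iff.1 hUt x₀ hx₀Ut
  set ε : ℝ := r / 2 with hεdef
  have hε : 0 < ε := by positivity
  set Cb : Set (En n) := closedBall x₀ ε with hCb
  have hCbUt : Cb ⊆ Ut := fun z hz => hrUt (lt_of_le_of_lt (mem_closedBall.1 hz) (by
    simp only [hεdef]; linarith))
  have hCbcomp : IsCompact Cb := isCompact_closedBall _ _
  -- coercivity constant for F
  have hsphere_sub : Cb ×ˢ (sphere (0 : En n) 1) ⊆ Ut ×ˢ (Set.univ : Set (En n)) :=
    fun p hp => ⟨hCbUt hp.1, trivial⟩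
  obtain ⟨m, hm, hmF⟩ := exists_coercivity Cb hCbcomp F (hFcont.mono hsphere_sub)
    (fun x hx y hy => by
      have h1 := (hFnorm x (hCbUt hx)).1 y
      have h2 := (hFnorm x (hCbUt hx)).2.1 y
      rcases h1.lt_or_eq with h | h
      · exact h
      · exfalso
        have : y = 0 := (h2).1 h.symm
        rw [this] at hy; simp at hy)
    (fun x hx l hl y => (hFnorm x (hCbUt hx)).2.2.1 l hl y)
  -- coercivity constant for G
  have hsphereG : Cb ×ˢ (sphere (0 : En n) 1) ⊆ Ut ×ˢ {y : En n | y ≠ 0} := by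
    rintro ⟨x, y⟩ ⟨hx, hy⟩
    simp only [mem_sphere_iff_norm, sub_zero] at hy
    refine ⟨hCbUt hx, ?_⟩
    show y ≠ 0
    intro h0; rw [h0] at hy; simp at hy
  obtain ⟨c, hc, hcG⟩ := exists_coercivity Cb hCbcomp G
    ((hG.2.continuousOn).mono hsphereG)
    (fun x hx y hy => by
      have h1 := (hG.1 x (hCbUt hx)).1 y
      have h2 := (hG.1 x (hCbUt hx)).2.1 y
      rcases h1.lt_or_eq with h | h
      · exact h
      · exfalso
        have : y = 0 := (h2).1 h.symm
        rw [this] at hy; simp at hy)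
    (fun x hx l hl y => (hG.1 x (hCbUt hx)).2.2.1 l hl y)
  -- Lipschitz constant for gh on a compact product
  set R : ℝ := (‖α₀‖ + 2) / m with hRdef
  have hR : 0 < R := by positivity
  obtain ⟨L, hL⟩ := lipschitzOnWith_of_compact (hUt.prod isOpen_univ) hghLip
    (hCbcomp.prod (isCompact_closedBall (0 : En n) R))
    (fun p hp => ⟨hCbUt hp.1, trivial⟩)
  -- continuity of each F x
  have hFxcont : ∀ x ∈ Ut, Continuous (F x) := by
    intro x hx
    rw [continuous_iff_continuousAt]
    intro y
    have h1 : ContinuousAt (fun p : En n × En n => F p.1 p.2) (x, y) :=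
      hFcont.continuousAt ((hUt.prod isOpen_univ).mem_nhds ⟨hx, trivial⟩)
    exact h1.comp (Continuous.prodMk_right x).continuousAt
  -- the dual-gradient identification on our neighborhood
  have hcore : ∀ x ∈ Cb, ∀ α : En n, α ∈ closedBall α₀ 1 →
      (∀ z, (F x ((4:ℝ)⁻¹ • g x α)) ^ 2 + ⟪α, z - (4:ℝ)⁻¹ • g x α⟫ ≤ (F x z) ^ 2) ∧
        ‖(4:ℝ)⁻¹ • g x α‖ ≤ R := by
    intro x hx α hα
    obtain ⟨h1, h2⟩ := dual_core F x (hFnorm x (hCbUt hx)) (hFxcont x (hCbUt hx)) hm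
      (fun y => hmF x hx y) α (g x α) (hg x (hCbUt hx) α)
    refine ⟨h1, ?_⟩
    set y := (4:ℝ)⁻¹ • g x α
    have h3 : ⟪α, y⟫ ≤ ‖α‖ * ‖y‖ := real_inner_le_norm α y
    have h4 : ‖α‖ ≤ ‖α₀‖ + 1 := by
      have h5 : ‖α - α₀‖ ≤ 1 := by rwa [mem_closedBall, dist_eq_norm] at hα
      have h6 := norm_sub_norm_le α α₀
      linarith
    rcases eq_or_lt_of_le (norm_nonneg y) with h7 | h7
    · rw [← h7]; positivity
    · have h8 : m * ‖y‖ ≤ ‖α₀‖ + 1 := by nlinarith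
      rw [hRdef, le_div_iff₀ hm]
      nlinarith
  -- the Lipschitz estimate
  refine ⟨Real.toNNReal (2 * ((L : ℝ) + 1) / c),
    Cb ×ˢ closedBall α₀ 1, mem_nhdsWithin_of_mem_nhds
      (prod_mem_nhds (closedBall_mem_nhds _ hε) (closedBall_mem_nhds _ one_pos)), ?_⟩
  rw [lipschitzOnWith_iff_dist_le_mul]
  rintro ⟨x₁, α₁⟩ ⟨hx₁, hα₁⟩ ⟨x₂, α₂⟩ ⟨hx₂, hα₂⟩
  set y₁ : En n := (4:ℝ)⁻¹ • g x₁ α₁ with hy₁def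
  set y₂ : En n := (4:ℝ)⁻¹ • g x₂ α₂ with hy₂def
  obtain ⟨hsub₁, hR₁⟩ := hcore x₁ hx₁ α₁ hα₁
  obtain ⟨hsub₂, hR₂⟩ := hcore x₂ hx₂ α₂ hα₂
  -- strong convexity at both points
  have hA1 := hsc x₁ (hCbUt hx₁) y₁ y₂ α₁ hsub₁
  have hA2 := hsc x₂ (hCbUt hx₂) y₂ y₁ α₂ hsub₂
  -- coercivity of G
  have hB1 : c * ‖y₂ - y₁‖ ^ 2 ≤ (G x₁ (y₂ - y₁)) ^ 2 := hcG x₁ hx₁ _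
  have hB2 : c * ‖y₂ - y₁‖ ^ 2 ≤ (G x₂ (y₁ - y₂)) ^ 2 := by
    have := hcG x₂ hx₂ (y₁ - y₂)
    rwa [norm_sub_rev] at this
  -- mean value estimate for φ x = F x y₂ ^ 2 - F x y₁ ^ 2
  have hmv : ‖((F x₁ y₂) ^ 2 - (F x₁ y₁) ^ 2) - ((F x₂ y₂) ^ 2 - (F x₂ y₁) ^ 2)‖ ≤
      (L : ℝ) * ‖y₂ - y₁‖ * ‖x₁ - x₂‖ := by
    have hderiv : ∀ x ∈ Cb, HasFDerivWithinAt (fun x' => (F x' y₂) ^ 2 - (F x' y₁) ^ 2)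
        ((InnerProductSpace.toDual ℝ (En n)) (gh (x, y₂)) -
          (InnerProductSpace.toDual ℝ (En n)) (gh (x, y₁))) Cb x := by
      intro x hx
      exact (((hgh x (hCbUt hx) y₂).hasFDerivAt.sub
        (hgh x (hCbUt hx) y₁).hasFDerivAt)).hasFDerivWithinAt
    have hbound : ∀ x ∈ Cb, ‖(InnerProductSpace.toDual ℝ (En n)) (gh (x, y₂)) -
        (InnerProductSpace.toDual ℝ (En n)) (gh (x, y₁))‖ ≤ (L : ℝ) * ‖y₂ - y₁‖ := by
      intro x hx
      rw [← map_sub, LinearIsometryEquiv.norm_map]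
      have hmem₂ : (x, y₂) ∈ Cb ×ˢ closedBall (0 : En n) R :=
        ⟨hx, by rwa [mem_closedBall, dist_zero_right]⟩
      have hmem₁ : (x, y₁) ∈ Cb ×ˢ closedBall (0 : En n) R :=
        ⟨hx, by rwa [mem_closedBall, dist_zero_right]⟩
      have := (lipschitzOnWith_iff_dist_le_mul.1 hL) _ hmem₂ _ hmem₁
      rw [← dist_eq_norm]
      calc dist (gh (x, y₂)) (gh (x, y₁)) ≤ (L : ℝ) * dist (x, y₂) (x, y₁) := this
        _ = (L : ℝ) * ‖y₂ - y₁‖ := by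
            rw [Prod.dist_eq]
            simp [dist_eq_norm, max_eq_right dist_nonneg]
    have := Convex.norm_image_sub_le_of_norm_hasFDerivWithin_le
      hderiv hbound (convex_closedBall x₀ ε) hx₂ hx₁
    exact this
  -- combine everything
  have hd : 2 * c * ‖y₂ - y₁‖ ^ 2 ≤
      (L : ℝ) * ‖y₂ - y₁‖ * ‖x₁ - x₂‖ + ‖α₁ - α₂‖ * ‖y₂ - y₁‖ := by
    have hinner : |⟪α₁ - α₂, y₂ - y₁⟫| ≤ ‖α₁ - α₂‖ * ‖y₂ - y₁‖ :=
      abs_real_inner_le_norm _ _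
    have e1 : ⟪α₁, y₂ - y₁⟫ - ⟪α₂, y₂ - y₁⟫ = ⟪α₁ - α₂, y₂ - y₁⟫ :=
      (inner_sub_left _ _ _).symm
    have e2 : ⟪α₂, y₁ - y₂⟫ = -⟪α₂, y₂ - y₁⟫ := by
      rw [← inner_neg_right]; congr 1; abel
    rw [Real.norm_eq_abs] at hmv
    have hmv' := abs_le.1 hmv
    have habs := abs_le.1 hinner
    rw [e2] at hA2
    nlinarith [hA1, hA2, hB1, hB2]
  have hy : 2 * c * ‖y₂ - y₁‖ ≤ (L : ℝ) * ‖x₁ - x₂‖ + ‖α₁ - α₂‖ := by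
    rcases eq_or_lt_of_le (norm_nonneg (y₂ - y₁)) with h7 | h7
    · rw [← h7, mul_zero]
      have hL0 : (0:ℝ) ≤ (L : ℝ) := L.2
      positivity
    · exact le_of_mul_le_mul_right (by nlinarith : 2 * c * ‖y₂ - y₁‖ * ‖y₂ - y₁‖ ≤
        ((L : ℝ) * ‖x₁ - x₂‖ + ‖α₁ - α₂‖) * ‖y₂ - y₁‖) h7
  -- conclude
  have hgdiff : g x₁ α₁ - g x₂ α₂ = (4:ℝ) • (y₁ - y₂) := by
    rw [hy₁def, hy₂def, smul_sub, smul_smul, smul_smul]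
    norm_num
  have hdist : dist (g x₁ α₁) (g x₂ α₂) = 4 * ‖y₁ - y₂‖ := by
    rw [dist_eq_norm, hgdiff, norm_smul]
    norm_num
  have hxd : ‖x₁ - x₂‖ ≤ dist (x₁, α₁) ((x₂, α₂) : En n × En n) := by
    rw [Prod.dist_eq]
    exact le_max_of_le_left (dist_eq_norm x₁ x₂).symm.le
  have hαd : ‖α₁ - α₂‖ ≤ dist (x₁, α₁) ((x₂, α₂) : En n × En n) := by
    rw [Prod.dist_eq]
    exact le_max_of_le_right (dist_eq_norm α₁ α₂).symm.le
  have hL0 : (0:ℝ) ≤ (L : ℝ) := L.2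
  have hdist0 : (0:ℝ) ≤ dist (x₁, α₁) ((x₂, α₂) : En n × En n) := dist_nonneg
  show dist (g x₁ α₁) (g x₂ α₂) ≤ _
  rw [hdist, Real.coe_toNNReal _ (by positivity)]
  have hnrev : ‖y₁ - y₂‖ = ‖y₂ - y₁‖ := norm_sub_rev _ _
  rw [hnrev]
  set D : ℝ := dist (x₁, α₁) ((x₂, α₂) : En n × En n) with hDdef
  have h9 : (L : ℝ) * ‖x₁ - x₂‖ + ‖α₁ - α₂‖ ≤ ((L : ℝ) + 1) * D := by
    nlinarith [mul_le_mul_of_nonneg_left hxd hL0]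
  have key : c * (4 * ‖y₂ - y₁‖) ≤ c * (2 * ((L : ℝ) + 1) / c * D) := by
    have hrhs : c * (2 * ((L : ℝ) + 1) / c * D) = 2 * (((L : ℝ) + 1) * D) := by
      field_simp
    rw [hrhs]
    linarith
  exact le_of_mul_le_mul_left key hc
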